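/- arXiv:1906.01881 — 5 statements merged into one kernel-verified Lean document; each statement's English description precedes it below -/
import Mathlib

section
/- Let V_l be the (2l+1)-dimensional irreducible unitary representation of su(2) with standard generators L₁, L₂, L₃ satisfying [L_i, L_j] = i ε_{ijk} L_k and L₁²+L₂²+L₃² = l(l+1)·I. Then for every unit vector ψ ∈ V_l, the uncertainty relation (ΔL)² ≥ |⟨L⟩| holds, where (ΔL)² := Σᵢ (⟨Lᵢ²⟩ − ⟨Lᵢ⟩²) and |⟨L⟩| := √(Σᵢ ⟨Lᵢ⟩²). Equivalently, l(l+1) ≥ |⟨L⟩|(|⟨L⟩|+1). -/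
/-- Expectation value `⟨A⟩ = ⟨ψ, Aψ⟩` of a (symmetric) operator in the state `ψ`. -/
noncomputable def expVal {V : Type*} [NormedAddCommGroup V] [InnerProductSpace ℂ V]
    (A : V →ₗ[ℂ] V) (ψ : V) : ℝ := (inner ℂ ψ (A ψ) : ℂ).re

/-!
Write `Φᵢ = (Lᵢ - ⟨Lᵢ⟩) ψ`, so that `(ΔL)² = ∑ ‖Φᵢ‖²`. For real vectors `p, q` put `c = p + i q`
and `X = ∑ cᵢ (Lᵢ - ⟨Lᵢ⟩)`. The adjoint of `X` is `X† = ∑ c̄ᵢ (Lᵢ - ⟨Lᵢ⟩)`, and the commutation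
relations give `[X, X†] = 2 (p × q) · L`. Hence
`2 (p × q) · ⟨L⟩ = ‖X† ψ‖² - ‖X ψ‖² ≤ ‖X† ψ‖² ≤ (|p|² + |q|²) (ΔL)²` by Cauchy–Schwarz.
Taking `p = |⟨L⟩| v`, `q = ⟨L⟩ × v` for a nonzero `v ⊥ ⟨L⟩` (so that `X` is a ladder operator
along `⟨L⟩`) gives `|⟨L⟩| ≤ (ΔL)²`, and the Casimir identity
`l(l+1) = (ΔL)² + |⟨L⟩|²` turns this into the second inequality.
-/

open scoped InnerProductSpace
open Complex Matrix

theorem lie_linearCombination_eq_smul_cross {R M : Type*} [CommRing R] [LieRing M] [LieAlgebra R M]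
    {L : Fin 3 → M} {k : R} (h01 : ⁅L 0, L 1⁆ = k • L 2) (h12 : ⁅L 1, L 2⁆ = k • L 0)
    (h20 : ⁅L 2, L 0⁆ = k • L 1) (c d : Fin 3 → R) :
    ⁅Fintype.linearCombination R L c, Fintype.linearCombination R L d⁆ =
      k • Fintype.linearCombination R L (c ⨯₃ d) := by
  have h10 : ⁅L 1, L 0⁆ = -(k • L 2) := by rw [← lie_skew, h01]
  have h21 : ⁅L 2, L 1⁆ = -(k • L 0) := by rw [← lie_skew, h12]
  have h02 : ⁅L 0, L 2⁆ = -(k • L 1) := by rw [← lie_skew, h20]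
  simp only [Fintype.linearCombination_apply, Fin.sum_univ_three, add_lie, lie_add, smul_lie,
    lie_smul, lie_self, h01, h12, h20, h10, h21, h02, cross_apply]
  simp only [cons_val_zero, cons_val_one, cons_val_two, tail_cons, head_cons]
  module

theorem sqrt_dotProduct_self_le_of_forall_cross_le {a : Fin 3 → ℝ} {T : ℝ}
    (h : ∀ p q : Fin 3 → ℝ, 2 * (p ⨯₃ q ⬝ᵥ a) ≤ (p ⬝ᵥ p + q ⬝ᵥ q) * T) :
    √(a ⬝ᵥ a) ≤ T := by
  obtain ⟨v, hv0, hva⟩ := exists_ne_zero_dotProduct_eq_zero a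
  have hv : 0 < v ⬝ᵥ v :=
    (dotProduct_self_star_nonneg v).lt_of_ne' (dotProduct_self_eq_zero.not.mpr hv0)
  have hT : 0 ≤ T := by
    have hvv := h v v
    rw [cross_self, zero_dotProduct] at hvv
    nlinarith
  set m := √(a ⬝ᵥ a)
  have hm : m * m = a ⬝ᵥ a := Real.mul_self_sqrt (dotProduct_self_star_nonneg a)
  have hq : a ⨯₃ v ⬝ᵥ a ⨯₃ v = m * m * (v ⬝ᵥ v) := by
    rw [cross_dot_cross, dotProduct_comm a v, hva, hm]; ring
  have hpq : (m • v) ⨯₃ (a ⨯₃ v) ⬝ᵥ a = m * (m * m * (v ⬝ᵥ v)) := by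
    rw [map_smul, LinearMap.smul_apply, smul_dotProduct, dotProduct_comm,
      ← triple_product_permutation, hq, smul_eq_mul]
  have hladder := h (m • v) (a ⨯₃ v)
  rw [hpq, hq, smul_dotProduct, dotProduct_smul, smul_eq_mul, smul_eq_mul] at hladder
  by_contra! hlt
  nlinarith [mul_pos (mul_pos (hT.trans_lt hlt) (hT.trans_lt hlt)) hv]

theorem lie_sub_algebraMap {R A : Type*} [CommRing R] [Ring A] [Algebra R A] (x y : A) (r s : R) :
    ⁅x - algebraMap R A r, y - algebraMap R A s⁆ = ⁅x, y⁆ := by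
  simp only [Ring.lie_def, sub_mul, mul_sub, Algebra.commutes r y, Algebra.commutes s x,
    ← map_mul, mul_comm r s]
  abel

theorem norm_sq_sub_norm_sq_eq_re_inner_lie {𝕜 E : Type*} [RCLike 𝕜] [NormedAddCommGroup E]
    [InnerProductSpace 𝕜 E] {A B : Module.End 𝕜 E} (hAB : ∀ x y, ⟪A x, y⟫_𝕜 = ⟪x, B y⟫_𝕜) (x : E) :
    ‖A x‖ ^ 2 - ‖B x‖ ^ 2 = RCLike.re ⟪x, ⁅B, A⁆ x⟫_𝕜 := by
  have hBA : ∀ x y, ⟪B x, y⟫_𝕜 = ⟪x, A y⟫_𝕜 := fun x y => by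
    rw [← inner_conj_symm, ← hAB, inner_conj_symm]
  rw [Ring.lie_def, LinearMap.sub_apply, inner_sub_right, map_sub, Module.End.mul_apply,
    Module.End.mul_apply, ← hAB x (A x), ← hBA x (B x), inner_self_eq_norm_sq,
    inner_self_eq_norm_sq]

theorem norm_sum_smul_sq_le {ι 𝕜 E : Type*} [RCLike 𝕜] [SeminormedAddCommGroup E] [NormedSpace 𝕜 E]
    (s : Finset ι) (c : ι → 𝕜) (x : ι → E) :
    ‖∑ i ∈ s, c i • x i‖ ^ 2 ≤ (∑ i ∈ s, ‖c i‖ ^ 2) * ∑ i ∈ s, ‖x i‖ ^ 2 := by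
  calc ‖∑ i ∈ s, c i • x i‖ ^ 2 ≤ (∑ i ∈ s, ‖c i‖ * ‖x i‖) ^ 2 := by
        gcongr
        exact (norm_sum_le _ _).trans_eq (by simp only [norm_smul])
    _ ≤ _ := Finset.sum_mul_sq_le_sq_mul_sq s _ _

section Spin

attribute [local instance] LieRing.ofAssociativeRing

variable {V : Type*} [NormedAddCommGroup V] [InnerProductSpace ℂ V]

theorem LinearMap.IsSymmetric.inner_self_apply_eq_expVal {A : Module.End ℂ V} (hA : A.IsSymmetric)
    (ψ : V) :
    ⟪ψ, A ψ⟫_ℂ = expVal A ψ :=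
  (hA.coe_re_inner_self_apply ψ).symm

theorem LinearMap.IsSymmetric.norm_sub_expVal_smul_sq {A : Module.End ℂ V} (hA : A.IsSymmetric)
    {ψ : V} (hψ : ‖ψ‖ = 1) :
    ‖A ψ - (expVal A ψ : ℂ) • ψ‖ ^ 2 = expVal (A ∘ₗ A) ψ - expVal A ψ ^ 2 := by
  have hAA : ‖A ψ‖ ^ 2 = expVal (A ∘ₗ A) ψ := by
    rw [expVal, LinearMap.comp_apply, ← hA, ← inner_self_eq_norm_sq (𝕜 := ℂ)]; rfl
  rw [@norm_sub_sq ℂ, hAA, inner_smul_right, hA, hA.inner_self_apply_eq_expVal, norm_smul, hψ]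
  simp only [RCLike.mul_re, RCLike.re_to_complex, ofReal_re, RCLike.im_to_complex, ofReal_im,
    mul_zero, sub_zero, norm_real, Real.norm_eq_abs, mul_one, sq_abs]
  ring

variable {L : Fin 3 → Module.End ℂ V}

theorem inner_linearCombination_apply_left (hL : ∀ i, (L i).IsSymmetric) (c : Fin 3 → ℂ)
    (x y : V) :
    ⟪Fintype.linearCombination ℂ L c x, y⟫_ℂ = ⟪x, Fintype.linearCombination ℂ L (star c) y⟫_ℂ := by
  simp [Fintype.linearCombination_apply, hL _ x, mul_comm]

theorem inner_linearCombination_apply_self (hL : ∀ i, (L i).IsSymmetric) (c : Fin 3 → ℂ) (ψ : V) :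
    ⟪ψ, Fintype.linearCombination ℂ L c ψ⟫_ℂ = ∑ i, c i * expVal (L i) ψ := by
  simp [Fintype.linearCombination_apply, (hL _).inner_self_apply_eq_expVal]

theorem two_mul_cross_dotProduct_expVal_le (hL : ∀ i, (L i).IsSymmetric)
    (h01 : ⁅L 0, L 1⁆ = I • L 2) (h12 : ⁅L 1, L 2⁆ = I • L 0) (h20 : ⁅L 2, L 0⁆ = I • L 1)
    (ψ : V) (p q : Fin 3 → ℝ) :
    2 * (p ⨯₃ q ⬝ᵥ fun i => expVal (L i) ψ) ≤
      (p ⬝ᵥ p + q ⬝ᵥ q) * ∑ i, ‖L i ψ - (expVal (L i) ψ : ℂ) • ψ‖ ^ 2 := by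
  set a : Fin 3 → ℝ := fun i => expVal (L i) ψ
  set L' : Fin 3 → Module.End ℂ V := fun i => L i - algebraMap ℂ _ (a i)
  set c : Fin 3 → ℂ := fun i => p i + q i * I
  have hL' : ∀ i, (L' i).IsSymmetric := fun i =>
    (hL i).sub ((LinearMap.IsSymmetric.one).smul (conj_ofReal (a i)))
  have hcomb : ∀ d, Fintype.linearCombination ℂ L' d =
      Fintype.linearCombination ℂ L d - algebraMap ℂ _ (∑ i, d i * a i) := by
    intro d
    simp only [L', Fintype.linearCombination_apply, Algebra.smul_def, mul_sub,
      Finset.sum_sub_distrib, map_sum, map_mul]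
  have hcross : c ⨯₃ star c = fun i => -(2 * I) * (p ⨯₃ q) i := by
    ext i; fin_cases i <;> simp [c, cross_apply] <;> ring
  have hcomm : RCLike.re ⟪ψ, ⁅Fintype.linearCombination ℂ L' c,
      Fintype.linearCombination ℂ L' (star c)⁆ ψ⟫_ℂ = 2 * (p ⨯₃ q ⬝ᵥ a) := by
    rw [hcomb, hcomb, lie_sub_algebraMap, lie_linearCombination_eq_smul_cross h01 h12 h20,
      LinearMap.smul_apply, inner_smul_right, inner_linearCombination_apply_self hL, hcross]
    simp [Finset.mul_sum, dotProduct, ← mul_assoc, a]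
  have hA : Fintype.linearCombination ℂ L' (star c) ψ =
      ∑ i, star c i • (L i ψ - (a i : ℂ) • ψ) := by
    simp [L', Fintype.linearCombination_apply]
  have hnorm_c : ∑ i, ‖star c i‖ ^ 2 = p ⬝ᵥ p + q ⬝ᵥ q := by
    simp only [c, Pi.star_apply, norm_star, Complex.sq_norm, normSq_add_mul_I,
      Finset.sum_add_distrib, dotProduct, ← sq]
  have hdiff :=
    norm_sq_sub_norm_sq_eq_re_inner_lie (inner_linearCombination_apply_left hL' (star c)) ψ
  rw [star_star, hcomm, hA] at hdiff
  have hCS := norm_sum_smul_sq_le Finset.univ (star c) fun i => L i ψ - (a i : ℂ) • ψ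
  rw [hnorm_c] at hCS
  nlinarith [sq_nonneg ‖Fintype.linearCombination ℂ L' c ψ‖]

theorem sqrt_sum_expVal_sq_le_sum_norm_sq (hL : ∀ i, (L i).IsSymmetric)
    (h01 : ⁅L 0, L 1⁆ = I • L 2) (h12 : ⁅L 1, L 2⁆ = I • L 0) (h20 : ⁅L 2, L 0⁆ = I • L 1)
    (ψ : V) :
    √(∑ i, expVal (L i) ψ ^ 2) ≤ ∑ i, ‖L i ψ - (expVal (L i) ψ : ℂ) • ψ‖ ^ 2 := by
  simpa [dotProduct, sq] using sqrt_dotProduct_self_le_of_forall_cross_le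
    (two_mul_cross_dotProduct_expVal_le hL h01 h12 h20 ψ)

end Spin

theorem stmt_9_general (l : ℕ) {V : Type*} [NormedAddCommGroup V] [InnerProductSpace ℂ V]
    (L : Fin 3 → (V →ₗ[ℂ] V))
    (hsym : ∀ i, (L i).IsSymmetric)
    (h12 : L 0 ∘ₗ L 1 - L 1 ∘ₗ L 0 = Complex.I • L 2)
    (h23 : L 1 ∘ₗ L 2 - L 2 ∘ₗ L 1 = Complex.I • L 0)
    (h31 : L 2 ∘ₗ L 0 - L 0 ∘ₗ L 2 = Complex.I • L 1)
    (hcas : L 0 ∘ₗ L 0 + L 1 ∘ₗ L 1 + L 2 ∘ₗ L 2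
      = ((l : ℂ) * ((l : ℂ) + 1)) • LinearMap.id)
    (ψ : V) (hψ : ‖ψ‖ = 1) :
    (∑ i, (expVal (L i ∘ₗ L i) ψ - (expVal (L i) ψ) ^ 2))
        ≥ Real.sqrt (∑ i, (expVal (L i) ψ) ^ 2) ∧
    (l : ℝ) * ((l : ℝ) + 1)
        ≥ Real.sqrt (∑ i, (expVal (L i) ψ) ^ 2)
          * (Real.sqrt (∑ i, (expVal (L i) ψ) ^ 2) + 1) := by
  have hunc :
      √(∑ i, expVal (L i) ψ ^ 2) ≤ ∑ i, (expVal (L i ∘ₗ L i) ψ - expVal (L i) ψ ^ 2) := by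
    simp only [← fun i => (hsym i).norm_sub_expVal_smul_sq hψ]
    exact sqrt_sum_expVal_sq_le_sum_norm_sq hsym h12 h23 h31 ψ
  have hcasψ : ∑ i, expVal (L i ∘ₗ L i) ψ = l * (l + 1) := by
    simpa [expVal, Fin.sum_univ_three, inner_self_eq_norm_sq_to_K, hψ] using
      congrArg (fun T => expVal T ψ) hcas
  have hsqrt : √(∑ i, expVal (L i) ψ ^ 2) ^ 2 = ∑ i, expVal (L i) ψ ^ 2 :=
    Real.sq_sqrt (by positivity)
  refine ⟨hunc, ?_⟩
  rw [Finset.sum_sub_distrib, hcasψ] at hunc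
  nlinarith

/-- On the `(2l+1)`-dimensional irreducible unitary representation of `su(2)` with
generators `L₁, L₂, L₃` satisfying `[Lᵢ,Lⱼ] = i ε_{ijk} L_k` and Casimir
`L₁²+L₂²+L₃² = l(l+1)·I`, every unit vector satisfies `(ΔL)² ≥ |⟨L⟩|`, equivalently
`l(l+1) ≥ |⟨L⟩|(|⟨L⟩|+1)`. -/
theorem stmt_9 (l : ℕ) {V : Type*} [NormedAddCommGroup V] [InnerProductSpace ℂ V]
    [FiniteDimensional ℂ V] (hdim : Module.finrank ℂ V = 2 * l + 1)
    (L : Fin 3 → (V →ₗ[ℂ] V))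
    (hsym : ∀ i, (L i).IsSymmetric)
    (h12 : L 0 ∘ₗ L 1 - L 1 ∘ₗ L 0 = Complex.I • L 2)
    (h23 : L 1 ∘ₗ L 2 - L 2 ∘ₗ L 1 = Complex.I • L 0)
    (h31 : L 2 ∘ₗ L 0 - L 0 ∘ₗ L 2 = Complex.I • L 1)
    (hcas : L 0 ∘ₗ L 0 + L 1 ∘ₗ L 1 + L 2 ∘ₗ L 2
      = ((l : ℂ) * ((l : ℂ) + 1)) • LinearMap.id)
    (ψ : V) (hψ : ‖ψ‖ = 1) :
    (∑ i, (expVal (L i ∘ₗ L i) ψ - (expVal (L i) ψ) ^ 2))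
        ≥ Real.sqrt (∑ i, (expVal (L i) ψ) ^ 2) ∧
    (l : ℝ) * ((l : ℝ) + 1)
        ≥ Real.sqrt (∑ i, (expVal (L i) ψ) ^ 2)
          * (Real.sqrt (∑ i, (expVal (L i) ψ) ^ 2) + 1) :=
  stmt_9_general l L hsym h12 h23 h31 hcas ψ hψ
end

section
/- Let Λ ≥ 2 be an integer, k ≥ Λ²(Λ+1)², and b_m := √(1+m(m−1)/k) for 1 ≤ m ≤ Λ. Define S := (2Λ/(2Λ+1)) + 2(Λ²−1)Λ/(3(2Λ+1)k) − 4[Σ_{m=1}^Λ b_m]²/(2Λ+1)². Then S ≤ 2/(3(Λ+1)). -/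
/-!
Each `b_m = √(1 + m(m-1)/k)` is at least `1`, so `∑ b_m ≥ Λ`; the dispersion decreases in this
sum and, as `Λ² ≥ 1`, also in `k`. Hence it is at most its value at `∑ b_m = Λ`,
`k = Λ²(Λ+1)²`, which is `2/(3(Λ+1))` minus the positive term
`2(Λ³ - Λ² + 2Λ + 1)/(3Λ(Λ+1)(2Λ+1)²)`.
-/

open Finset

/-- The square space dispersion as a function of `Λ`, `k` and `s = ∑ b_m`. -/
noncomputable def sqDispersion (L k s : ℝ) : ℝ :=
  2 * L / (2 * L + 1) + 2 * (L ^ 2 - 1) * L / (3 * (2 * L + 1) * k) - 4 * s ^ 2 / (2 * L + 1) ^ 2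

lemma natCast_le_sum_sqrt_one_add {k : ℝ} (hk : 0 ≤ k) (n : ℕ) :
    (n : ℝ) ≤ ∑ m ∈ Icc 1 n, √(1 + (m : ℝ) * ((m : ℝ) - 1) / k) := by
  calc (n : ℝ) = ∑ _m ∈ Icc 1 n, (1 : ℝ) := by simp
    _ ≤ _ := by
      refine sum_le_sum fun m hm => Real.one_le_sqrt.mpr ?_
      have hm : (1 : ℝ) ≤ m := by exact_mod_cast (mem_Icc.mp hm).1
      have : 0 ≤ (m : ℝ) * ((m : ℝ) - 1) / k := by positivity [sub_nonneg.mpr hm]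
      linarith

lemma sqDispersion_le_of_le {L K k s : ℝ} (hL : 1 ≤ L) (hK : 0 < K) (hKk : K ≤ k) (hLs : L ≤ s) :
    sqDispersion L k s ≤ sqDispersion L K L := by
  have h2L : 0 < 2 * L + 1 := by linarith
  have hs : 4 * L ^ 2 / (2 * L + 1) ^ 2 ≤ 4 * s ^ 2 / (2 * L + 1) ^ 2 := by
    gcongr
  have hk : 2 * (L ^ 2 - 1) * L / (3 * (2 * L + 1) * k)
      ≤ 2 * (L ^ 2 - 1) * L / (3 * (2 * L + 1) * K) := by
    have : 0 ≤ L ^ 2 - 1 := by nlinarith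
    gcongr
  unfold sqDispersion
  linarith

lemma sqDispersion_extremal {L : ℝ} (hL : 0 < L) :
    sqDispersion L (L ^ 2 * (L + 1) ^ 2) L
      = 2 / (3 * (L + 1)) - 2 * (L ^ 3 - L ^ 2 + 2 * L + 1) / (3 * (L + 1) * (2 * L + 1) ^ 2 * L) := by
  unfold sqDispersion
  field_simp
  ring

lemma sqDispersion_extremal_le {L : ℝ} (hL : 0 < L) :
    sqDispersion L (L ^ 2 * (L + 1) ^ 2) L ≤ 2 / (3 * (L + 1)) := by
  rw [sqDispersion_extremal hL, sub_le_self_iff]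
  have : 0 < L ^ 3 - L ^ 2 + 2 * L + 1 := by nlinarith [sq_nonneg (L - 1)]
  positivity

/-- For `Λ ≥ 2`, `k ≥ Λ²(Λ+1)²` and `b_m = √(1+m(m−1)/k)`, the square space dispersion
`S = 2Λ/(2Λ+1) + 2(Λ²−1)Λ/(3(2Λ+1)k) − 4[∑_{m=1}^Λ b_m]²/(2Λ+1)²` of the
uniform-phase coherent states on the fuzzy circle satisfies `S ≤ 2/(3(Λ+1))`. -/
theorem stmt_16 (Λ : ℕ) (hΛ : 2 ≤ Λ) (k : ℝ)
    (hk : (Λ : ℝ) ^ 2 * ((Λ : ℝ) + 1) ^ 2 ≤ k) :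
    2 * (Λ : ℝ) / (2 * (Λ : ℝ) + 1)
        + 2 * ((Λ : ℝ) ^ 2 - 1) * (Λ : ℝ) / (3 * (2 * (Λ : ℝ) + 1) * k)
        - 4 * (∑ m ∈ Finset.Icc 1 Λ, Real.sqrt (1 + (m : ℝ) * ((m : ℝ) - 1) / k)) ^ 2
            / (2 * (Λ : ℝ) + 1) ^ 2
      ≤ 2 / (3 * ((Λ : ℝ) + 1)) := by
  have hL : (2 : ℝ) ≤ Λ := by exact_mod_cast hΛ
  have hK : 0 < (Λ : ℝ) ^ 2 * ((Λ : ℝ) + 1) ^ 2 := by positivity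
  have hs := natCast_le_sum_sqrt_one_add (hK.trans_le hk).le Λ
  exact (sqDispersion_le_of_le (by linarith) hK hk hs).trans (sqDispersion_extremal_le (by linarith))
end

section
/- Let Λ ≥ 1, k ≥ Λ²(Λ+1)², and let χ ∈ ℝ^{2Λ+1} have components χ_m = cos(πm/(2Λ+2)) for m = −Λ,...,Λ. Then ⟨χ,χ⟩ = Λ+1, and the quantity ⟨x²⟩_χ := 1 + [2Σ_{m=1}^{Λ−1}(m²/k)χ_m²]/(Λ+1) + [Λ(Λ−1)/k − 1]χ_Λ²/(Λ+1) satisfies ⟨x²⟩_χ ≤ 1 + 1/(Λ+1)². -/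
/-!
Reflecting `m ↦ Λ + 1 - m` turns `cos (π m / (2Λ + 2))` into `sin (π m / (2Λ + 2))`, so
`∑_{m=0}^{Λ+1} cos² = (Λ + 2) / 2` by `cos² + sin² = 1`; as `χ` is even with `χ_0 = 1`, its
squared norm is `2 (Λ + 2) / 2 - 1`. For the bound, the last term
of `⟨x²⟩_χ` is nonpositive because `Λ(Λ - 1) ≤ k`, and the remaining sum is at most
`∑_{m < Λ} m² / k ≤ Λ³ / (2k)`, which is at most `1 / (2(Λ + 1))` once `k ≥ Λ²(Λ + 1)²`.
-/

open Finset Real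

theorem sum_range_cos_sq_of_mul_eq_pi_div_two (N : ℕ) {θ : ℝ} (hθ : N * θ = π / 2) :
    ∑ m ∈ range (N + 1), cos (m * θ) ^ 2 = (N + 1) / 2 := by
  have hreflect :
      ∑ m ∈ range (N + 1), cos (m * θ) ^ 2 = ∑ m ∈ range (N + 1), sin (m * θ) ^ 2 := by
    rw [← sum_range_reflect]
    refine sum_congr rfl fun m hm => ?_
    have hmN : m ≤ N := Nat.lt_succ_iff.mp (mem_range.mp hm)
    rw [Nat.add_sub_cancel, Nat.cast_sub hmN, sub_mul, hθ, cos_pi_div_two_sub]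
  have hpyth : ∑ m ∈ range (N + 1), (cos (m * θ) ^ 2 + sin (m * θ) ^ 2) = N + 1 := by
    simp [cos_sq_add_sin_sq]
  rw [sum_add_distrib, ← hreflect] at hpyth
  linarith

theorem sum_Icc_neg_cos_sq (n : ℕ) :
    ∑ m ∈ Icc (-(n : ℤ)) n, cos (π * m / (2 * n + 2)) ^ 2 = n + 1 := by
  have heven : Function.Even fun m : ℤ => cos (π * m / (2 * n + 2)) ^ 2 := fun m => by
    simp only [Int.cast_neg, mul_neg, neg_div, cos_neg]
  have hθ : ((n + 1 : ℕ) : ℝ) * (π / (2 * n + 2)) = π / 2 := by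
    push_cast; field_simp
  have hhalf := sum_range_cos_sq_of_mul_eq_pi_div_two (n + 1) hθ
  have hlast : cos (((n + 1 : ℕ) : ℝ) * (π / (2 * n + 2))) = 0 := by rw [hθ, cos_pi_div_two]
  have hcomm : ∀ m : ℕ, (m : ℝ) * (π / (2 * n + 2)) = π * m / (2 * n + 2) := fun m => by ring
  rw [sum_range_succ, hlast] at hhalf
  simp only [hcomm] at hhalf
  rw [sum_Icc_of_even_eq_range heven]
  simp only [Int.cast_natCast, Int.cast_zero, mul_zero, zero_div, cos_zero, one_pow, nsmul_eq_mul,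
    Nat.cast_ofNat]
  push_cast at hhalf
  linarith

theorem two_mul_sum_range_sq_le (n : ℕ) : 2 * ∑ m ∈ range n, (m : ℝ) ^ 2 ≤ n ^ 3 := by
  induction n with
  | zero => simp
  | succ n ih =>
    rw [sum_range_succ]
    push_cast
    nlinarith [(n.cast_nonneg : (0 : ℝ) ≤ n)]

theorem two_mul_sum_Icc_sq_div_mul_le {n : ℕ} {k : ℝ} (hk : (n : ℝ) ^ 2 * (n + 1) ^ 2 ≤ k)
    {c : ℕ → ℝ} (hc : ∀ m, c m ≤ 1) :
    2 * ∑ m ∈ Icc 1 (n - 1), ((m : ℝ) ^ 2 / k) * c m ≤ 1 / (n + 1) := by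
  have hk₀ : 0 ≤ k := le_trans (by positivity) hk
  have hsub : Icc 1 (n - 1) ⊆ range n := fun m hm => by
    simp only [mem_Icc, mem_range] at hm ⊢; omega
  have hsum : 2 * ∑ m ∈ Icc 1 (n - 1), (m : ℝ) ^ 2 * c m ≤ n ^ 3 :=
    calc 2 * ∑ m ∈ Icc 1 (n - 1), (m : ℝ) ^ 2 * c m
        ≤ 2 * ∑ m ∈ Icc 1 (n - 1), (m : ℝ) ^ 2 := by
          gcongr with m
          exact mul_le_of_le_one_right (sq_nonneg _) (hc m)
      _ ≤ 2 * ∑ m ∈ range n, (m : ℝ) ^ 2 := by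
          gcongr
      _ ≤ n ^ 3 := two_mul_sum_range_sq_le n
  simp only [div_mul_eq_mul_div, ← sum_div, ← mul_div_assoc]
  refine div_le_of_le_mul₀ hk₀ (by positivity) ?_
  rw [one_div_mul_eq_div, le_div_iff₀ (by positivity)]
  nlinarith [(n.cast_nonneg : (0 : ℝ) ≤ n)]

theorem stmt_17_general (Λ : ℕ) (k : ℝ)
    (hk : (Λ : ℝ) ^ 2 * ((Λ : ℝ) + 1) ^ 2 ≤ k) :
    (∑ m ∈ Finset.Icc (-(Λ : ℤ)) (Λ : ℤ),
        Real.cos (π * (m : ℝ) / (2 * (Λ : ℝ) + 2)) ^ 2) = (Λ : ℝ) + 1 ∧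
    1 + (2 * ∑ m ∈ Finset.Icc 1 (Λ - 1),
          ((m : ℝ) ^ 2 / k) * Real.cos (π * (m : ℝ) / (2 * (Λ : ℝ) + 2)) ^ 2)
            / ((Λ : ℝ) + 1)
      + ((Λ : ℝ) * ((Λ : ℝ) - 1) / k - 1)
          * Real.cos (π * (Λ : ℝ) / (2 * (Λ : ℝ) + 2)) ^ 2 / ((Λ : ℝ) + 1)
      ≤ 1 + 1 / ((Λ : ℝ) + 1) ^ 2 := by
  refine ⟨sum_Icc_neg_cos_sq Λ, ?_⟩
  have hΛ₀ : (0 : ℝ) ≤ Λ := Λ.cast_nonneg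
  have hk₀ : 0 ≤ k := le_trans (by positivity) hk
  have hbulk := two_mul_sum_Icc_sq_div_mul_le hk
    (c := fun m => cos (π * m / (2 * Λ + 2)) ^ 2) fun _ => cos_sq_le_one _
  have hedge : ((Λ : ℝ) * (Λ - 1) / k - 1) * cos (π * Λ / (2 * Λ + 2)) ^ 2 ≤ 0 :=
    mul_nonpos_of_nonpos_of_nonneg
      (sub_nonpos.mpr (div_le_one_of_le₀ (by nlinarith) hk₀)) (sq_nonneg _)
  have hnum :=
    div_le_div_of_nonneg_right (add_le_add hbulk hedge) (by positivity : (0 : ℝ) ≤ Λ + 1)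
  rw [add_zero, div_div, ← sq, add_div] at hnum
  linarith

/-- For `Λ ≥ 1` and `k ≥ Λ²(Λ+1)²`, the vector `χ` with components
`χ_m = cos(πm/(2Λ+2))`, `m = −Λ,…,Λ`, satisfies `⟨χ,χ⟩ = Λ+1` and
`⟨x²⟩_χ = 1 + [2∑_{m=1}^{Λ−1}(m²/k)χ_m²]/(Λ+1) + [Λ(Λ−1)/k − 1]χ_Λ²/(Λ+1)
  ≤ 1 + 1/(Λ+1)²`. -/
theorem stmt_17 (Λ : ℕ) (hΛ : 1 ≤ Λ) (k : ℝ)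
    (hk : (Λ : ℝ) ^ 2 * ((Λ : ℝ) + 1) ^ 2 ≤ k) :
    (∑ m ∈ Finset.Icc (-(Λ : ℤ)) (Λ : ℤ),
        Real.cos (π * (m : ℝ) / (2 * (Λ : ℝ) + 2)) ^ 2) = (Λ : ℝ) + 1 ∧
    1 + (2 * ∑ m ∈ Finset.Icc 1 (Λ - 1),
          ((m : ℝ) ^ 2 / k) * Real.cos (π * (m : ℝ) / (2 * (Λ : ℝ) + 2)) ^ 2)
            / ((Λ : ℝ) + 1)
      + ((Λ : ℝ) * ((Λ : ℝ) - 1) / k - 1)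
          * Real.cos (π * (Λ : ℝ) / (2 * (Λ : ℝ) + 2)) ^ 2 / ((Λ : ℝ) + 1)
      ≤ 1 + 1 / ((Λ : ℝ) + 1) ^ 2 :=
  stmt_17_general Λ k hk
end

section
/- Let Λ ≥ 1 and define χ_m := cos(πm/(2Λ+2)) for m = −Λ,...,Λ and b_m := √(1+m(m−1)/k) with k > 0. Then Σ_{m=1−Λ}^{Λ} b_m χ_m χ_{m−1} ≥ (Λ+1)·cos(π/(2Λ+2)). -/
/-!
Every weight `b_m` is at least `1` and every `χ_m χ_{m-1}` is nonnegative (all arguments lie in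
`[-π/2, π/2]`), so the sum dominates `∑ χ_m χ_{m-1}`, which we evaluate exactly. With
`θ = π/(2Λ+2)`, product-to-sum gives `2 χ_m χ_{m-1} = cos θ + cos((2m-1)θ)`, and multiplying
`∑ cos((2m-1)θ)` by `2 sin θ` telescopes to `2 sin(2Λθ) = 2 sin 2θ`, so that sum is `2 cos θ`.
-/

open Real

open Finset in
theorem Int.sum_Icc_sub_sub_one {M : Type*} [AddCommGroup M] (f : ℤ → M) {a b : ℤ}
    (hab : a - 1 ≤ b) : ∑ m ∈ Icc a b, (f m - f (m - 1)) = f b - f (a - 1) := by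
  induction b, hab using Int.leInduction with
  | base => simp
  | succ b hb ih =>
    rw [← insert_Icc_right_eq_Icc_add_one (by omega), sum_insert (by simp), ih, add_sub_cancel_right]
    abel

theorem Int.cast_mul_sub_one_nonneg {R : Type*} [Ring R] [PartialOrder R] [IsOrderedRing R]
    (m : ℤ) : (0 : R) ≤ m * (m - 1) := by
  have : 0 ≤ m * (m - 1) := by rcases le_or_gt m 0 with h | h <;> nlinarith
  exact_mod_cast Int.cast_nonneg this

namespace Real

theorem sum_Icc_cos_odd_mul_mul_two_sin (θ : ℝ) (n : ℕ) :
    (∑ m ∈ Finset.Icc (1 - (n : ℤ)) n, cos ((2 * m - 1) * θ)) * (2 * sin θ)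
      = 2 * sin (2 * n * θ) := by
  have hstep (m : ℤ) : cos ((2 * m - 1) * θ) * (2 * sin θ)
      = sin (2 * m * θ) - sin (2 * ((m - 1 : ℤ) : ℝ) * θ) := by
    rw [mul_comm, two_mul_sin_mul_cos, show θ - (2 * m - 1) * θ = -(2 * ((m - 1 : ℤ) : ℝ) * θ) by
      push_cast; ring, show θ + (2 * m - 1) * θ = 2 * m * θ by ring, sin_neg]
    ring
  rw [Finset.sum_mul, Finset.sum_congr rfl fun m _ => hstep m,
    Int.sum_Icc_sub_sub_one (fun m : ℤ => sin (2 * (m : ℝ) * θ)) (by omega)]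
  push_cast
  rw [show 2 * (1 - (n : ℝ) - 1) * θ = -(2 * n * θ) by ring, sin_neg]
  ring

variable {n : ℕ} {θ : ℝ}

theorem sum_Icc_cos_odd_mul_of_mul_eq_pi (hθ : (2 * n + 2) * θ = π) :
    ∑ m ∈ Finset.Icc (1 - (n : ℤ)) n, cos ((2 * m - 1) * θ) = 2 * cos θ := by
  have hsin : sin θ ≠ 0 := by
    refine (sin_pos_of_pos_of_lt_pi ?_ ?_).ne' <;> nlinarith [pi_pos]
  have h := sum_Icc_cos_odd_mul_mul_two_sin θ n
  rw [show 2 * n * θ = π - 2 * θ by linarith, sin_pi_sub, sin_two_mul] at h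
  apply mul_right_cancel₀ (mul_ne_zero two_ne_zero hsin)
  linear_combination h

theorem sum_Icc_cos_mul_cos_sub_one (hθ : (2 * n + 2) * θ = π) :
    ∑ m ∈ Finset.Icc (1 - (n : ℤ)) n, cos (m * θ) * cos ((m - 1) * θ) = (n + 1) * cos θ := by
  have hprod (m : ℤ) : cos (m * θ) * cos ((m - 1) * θ) = (cos θ + cos ((2 * m - 1) * θ)) / 2 := by
    rw [eq_div_iff two_ne_zero, mul_comm, ← mul_assoc, two_mul_cos_mul_cos,
      show m * θ - (m - 1) * θ = θ by ring, show m * θ + (m - 1) * θ = (2 * m - 1) * θ by ring]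
  simp_rw [hprod, ← Finset.sum_div, Finset.sum_add_distrib, sum_Icc_cos_odd_mul_of_mul_eq_pi hθ,
    Finset.sum_const, Int.card_Icc, nsmul_eq_mul]
  rw [show (n : ℤ) + 1 - (1 - n) = ((2 * n : ℕ) : ℤ) by push_cast; ring, Int.toNat_natCast]
  push_cast
  ring

theorem cos_int_mul_nonneg (hθ : (2 * n + 2) * θ = π) {m : ℤ} (hm : |m| ≤ n + 1) :
    0 ≤ cos (m * θ) := by
  have hθ0 : 0 ≤ θ := by nlinarith [pi_pos]
  have hm' : |(m : ℝ)| ≤ n + 1 := by exact_mod_cast hm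
  apply cos_nonneg_of_mem_Icc
  rw [Set.mem_Icc, ← abs_le, abs_mul, abs_of_nonneg hθ0]
  nlinarith

end Real

theorem stmt_18_general (Λ : ℕ) (k : ℝ) (hk : 0 < k) :
    ∑ m ∈ Finset.Icc (1 - (Λ : ℤ)) (Λ : ℤ),
        Real.sqrt (1 + (m : ℝ) * ((m : ℝ) - 1) / k)
          * Real.cos (π * (m : ℝ) / (2 * (Λ : ℝ) + 2))
          * Real.cos (π * ((m : ℝ) - 1) / (2 * (Λ : ℝ) + 2))
      ≥ ((Λ : ℝ) + 1) * Real.cos (π / (2 * (Λ : ℝ) + 2)) := by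
  set θ := π / (2 * (Λ : ℝ) + 2)
  have hθ : (2 * Λ + 2) * θ = π := mul_div_cancel₀ π (by positivity)
  have harg (x : ℝ) : π * x / (2 * (Λ : ℝ) + 2) = x * θ := by ring
  simp_rw [harg, mul_assoc]
  rw [ge_iff_le, ← sum_Icc_cos_mul_cos_sub_one hθ]
  refine Finset.sum_le_sum fun m hm => le_mul_of_one_le_left ?_ ?_
  · rw [Finset.mem_Icc] at hm
    have h1 := cos_int_mul_nonneg hθ (m := m) (abs_le.2 ⟨by omega, by omega⟩)
    have h2 := cos_int_mul_nonneg hθ (m := m - 1) (abs_le.2 ⟨by omega, by omega⟩)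
    push_cast at h2
    positivity
  · rw [one_le_sqrt, le_add_iff_nonneg_right]
    exact div_nonneg (Int.cast_mul_sub_one_nonneg m) hk.le

/-- For `Λ ≥ 1`, `k > 0`, `χ_m = cos(πm/(2Λ+2))` and `b_m = √(1+m(m−1)/k)`:
`∑_{m=1−Λ}^{Λ} b_m χ_m χ_{m−1} ≥ (Λ+1) cos(π/(2Λ+2))`. -/
theorem stmt_18 (Λ : ℕ) (hΛ : 1 ≤ Λ) (k : ℝ) (hk : 0 < k) :
    ∑ m ∈ Finset.Icc (1 - (Λ : ℤ)) (Λ : ℤ),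
        Real.sqrt (1 + (m : ℝ) * ((m : ℝ) - 1) / k)
          * Real.cos (π * (m : ℝ) / (2 * (Λ : ℝ) + 2))
          * Real.cos (π * ((m : ℝ) - 1) / (2 * (Λ : ℝ) + 2))
      ≥ ((Λ : ℝ) + 1) * Real.cos (π / (2 * (Λ : ℝ) + 2)) :=
  stmt_18_general Λ k hk
end

section
/- Let Λ ≥ 1 and k = k(Λ) ≥ Λ²(Λ+1)². On the fuzzy circle S¹_Λ, the state χ with components χ_m = cos(πm/(2Λ+2)) (m = −Λ,...,Λ) satisfies (Δx)²_χ := ⟨x²⟩_χ − ⟨x₁⟩_χ² ≤ (1 + π²/4)/(Λ+1)² < 3.5/(Λ+1)². -/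
open Real Finset

/-! With `θ = π/(2Λ+2)`, bounding every `χ_m²` by `1` and using `∑ m² = n(n+1)(2n+1)/6` together
with `k ≥ Λ²(Λ+1)²` gives `⟨x²⟩ ≤ 1 + 1/(Λ+1)²`. Since `b_m ≥ 1` and `χ_m ≥ 0`,
`⟨x₁⟩ ≥ (Λ+1)⁻¹ ∑ χ_m χ_{m-1}`, and product-to-sum turns this sum into `Λ cos θ` plus a
telescoping sum of `cos((2m-1)θ)` which equals `2 cos θ` because `sin(2Λθ) = sin 2θ`. Hence
`⟨x₁⟩² ≥ cos² θ = 1 - sin² θ ≥ 1 - θ² = 1 - π²/(4(Λ+1)²)`. -/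

theorem Finset.sum_Icc_int_sub_pred {M : Type*} [AddCommGroup M] (f : ℤ → M) {a b : ℤ}
    (hab : a ≤ b + 1) : ∑ m ∈ Icc a b, (f m - f (m - 1)) = f b - f (a - 1) := by
  induction b, (show a - 1 ≤ b by omega) using Int.leInduction with
  | base => simp
  | succ b hb ih =>
    rw [← insert_Icc_right_eq_Icc_add_one (by omega), sum_insert (by simp), ih (by omega)]
    simp only [add_sub_cancel_right]
    abel

theorem sum_Icc_one_sq {R : Type*} [CommSemiring R] (n : ℕ) :
    6 * ∑ m ∈ Icc 1 n, (m : R) ^ 2 = n * (n + 1) * (2 * n + 1) := by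
  induction n with
  | zero => simp
  | succ n ih =>
    rw [sum_Icc_succ_top (by omega), mul_add, ih]
    push_cast; ring

theorem sin_mul_sum_cos_odd_mul (n : ℕ) (θ : ℝ) :
    sin θ * ∑ m ∈ Icc (1 - n : ℤ) n, cos ((2 * m - 1) * θ) = sin (2 * n * θ) := by
  have hstep (m : ℤ) : 2 * sin θ * cos ((2 * m - 1) * θ)
      = sin (2 * m * θ) - sin (2 * ((m - 1 : ℤ) : ℝ) * θ) := by
    rw [two_mul_sin_mul_cos, show θ - (2 * m - 1) * θ = -(2 * ((m - 1 : ℤ) : ℝ) * θ) by push_cast; ring,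
      sin_neg]
    ring_nf
  have htel := Finset.sum_Icc_int_sub_pred (fun m : ℤ ↦ sin (2 * m * θ))
    (a := 1 - n) (b := n) (by omega)
  rw [← sum_congr rfl fun m _ ↦ hstep m, ← mul_sum] at htel
  have : 2 * ((1 - n - 1 : ℤ) : ℝ) * θ = -(2 * n * θ) := by push_cast; ring
  rw [this, sin_neg] at htel
  push_cast at htel
  linarith

theorem sum_cos_mul_cos_sub_one (n : ℕ) :
    ∑ m ∈ Icc (1 - n : ℤ) n, cos (π * m / (2 * n + 2)) * cos (π * (m - 1) / (2 * n + 2))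
      = (n + 1) * cos (π / (2 * n + 2)) := by
  set θ := π / (2 * n + 2) with hθ
  have hθ_pos : 0 < θ := by positivity
  have hθ_lt : θ < π := by rw [hθ, div_lt_iff₀ (by positivity)]; nlinarith [pi_pos]
  have hsin : sin θ ≠ 0 := (sin_pos_of_pos_of_lt_pi hθ_pos hθ_lt).ne'
  have hodd : ∑ m ∈ Icc (1 - n : ℤ) n, cos ((2 * m - 1) * θ) = 2 * cos θ := by
    apply mul_left_cancel₀ hsin
    have : 2 * n * θ = π - 2 * θ := by rw [hθ]; field_simp; ring
    rw [sin_mul_sum_cos_odd_mul, this, sin_pi_sub, sin_two_mul]; ring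
  have hprod (m : ℤ) : cos (π * m / (2 * n + 2)) * cos (π * (m - 1) / (2 * n + 2))
      = (cos θ + cos ((2 * m - 1) * θ)) / 2 := by
    rw [← mul_div_cancel_left₀ (cos _ * cos _) two_ne_zero, ← mul_assoc, two_mul_cos_mul_cos]
    congr 3 <;> rw [hθ] <;> ring
  have hcard : #(Icc (1 - n : ℤ) n) = 2 * n := by rw [Int.card_Icc]; omega
  rw [sum_congr rfl fun m _ ↦ hprod m, ← sum_div, sum_add_distrib, hodd, sum_const, hcard,
    nsmul_eq_mul]
  push_cast; ring

theorem cos_pi_mul_div_nonneg {n : ℕ} {x : ℝ} (hlo : -(n + 1) ≤ x) (hhi : x ≤ n + 1) :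
    0 ≤ cos (π * x / (2 * n + 2)) := by
  have hden : (0 : ℝ) < 2 * n + 2 := by positivity
  apply cos_nonneg_of_neg_pi_div_two_le_of_le
  · rw [le_div_iff₀ hden]; nlinarith [pi_pos]
  · rw [div_le_iff₀ hden]; nlinarith [pi_pos]

theorem cos_le_first_moment (Λ : ℕ) {k : ℝ} (hk : 0 ≤ k) :
    cos (π / (2 * Λ + 2)) ≤
      (∑ m ∈ Icc (1 - Λ : ℤ) Λ, √(1 + m * (m - 1) / k)
        * cos (π * m / (2 * Λ + 2)) * cos (π * (m - 1) / (2 * Λ + 2))) / (Λ + 1) := by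
  rw [le_div_iff₀' (by positivity), ← sum_cos_mul_cos_sub_one]
  refine sum_le_sum fun m hm ↦ ?_
  obtain ⟨hlo, hhi⟩ : (1 - Λ : ℝ) ≤ m ∧ (m : ℝ) ≤ Λ := by
    rw [mem_Icc] at hm; exact ⟨by exact_mod_cast hm.1, by exact_mod_cast hm.2⟩
  have hprod : 0 ≤ cos (π * m / (2 * Λ + 2)) * cos (π * (m - 1) / (2 * Λ + 2)) :=
    mul_nonneg (cos_pi_mul_div_nonneg (by linarith) (by linarith))
      (cos_pi_mul_div_nonneg (by linarith) (by linarith))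
  have hcoef : 1 ≤ √(1 + m * (m - 1) / k) := by
    have hm_int : 0 ≤ m * (m - 1) := by nlinarith [Int.le_self_sq m]
    have hm_real : (0 : ℝ) ≤ m * (m - 1) := by exact_mod_cast hm_int
    exact one_le_sqrt.mpr (le_add_of_nonneg_right (div_nonneg hm_real hk))
  rw [mul_assoc]
  exact le_mul_of_one_le_left hprod hcoef

theorem two_mul_sum_sq_add_mul_le (Λ : ℕ) :
    (2 * ∑ m ∈ Icc 1 (Λ - 1), (m : ℝ) ^ 2 + Λ * (Λ - 1)) * (Λ + 1) ≤ Λ ^ 2 * (Λ + 1) ^ 2 := by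
  rcases Λ with _ | n
  · simp
  · have h := sum_Icc_one_sq (R := ℝ) n
    simp only [add_tsub_cancel_right]
    push_cast
    nlinarith [sq_nonneg (n : ℝ), (n.cast_nonneg : (0 : ℝ) ≤ n)]

theorem second_moment_le (Λ : ℕ) {k : ℝ} (hk : (Λ : ℝ) ^ 2 * (Λ + 1) ^ 2 ≤ k)
    (χ : ℕ → ℝ) (hχ : ∀ m, χ m ^ 2 ≤ 1) :
    1 + (2 * ∑ m ∈ Icc 1 (Λ - 1), ((m : ℝ) ^ 2 / k) * χ m ^ 2) / (Λ + 1)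
      + (Λ * (Λ - 1) / k - 1) * χ Λ ^ 2 / (Λ + 1) ≤ 1 + 1 / (Λ + 1) ^ 2 := by
  have hk0 : 0 ≤ k := le_trans (by positivity) hk
  have hsum : ∑ m ∈ Icc 1 (Λ - 1), ((m : ℝ) ^ 2 / k) * χ m ^ 2
      ≤ (∑ m ∈ Icc 1 (Λ - 1), (m : ℝ) ^ 2) / k := by
    rw [sum_div]
    exact sum_le_sum fun m _ ↦ mul_le_of_le_one_right (by positivity) (hχ m)
  have hlast : (Λ * (Λ - 1) / k - 1) * χ Λ ^ 2 ≤ Λ * (Λ - 1) / k := by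
    have hcoef : (0 : ℝ) ≤ Λ * (Λ - 1) / k := by
      rcases Λ with _ | n
      · simp
      · push_cast; rw [add_sub_cancel_right]; positivity
    nlinarith [hχ Λ, sq_nonneg (χ Λ)]
  have htotal : (2 * ∑ m ∈ Icc 1 (Λ - 1), (m : ℝ) ^ 2 + Λ * (Λ - 1)) / k ≤ 1 / (Λ + 1) := by
    refine div_le_of_le_mul₀ hk0 (by positivity) ?_
    rw [div_mul_eq_mul_div, le_div_iff₀ (by positivity)]
    linarith [two_mul_sum_sq_add_mul_le Λ]
  have hsq : (1 : ℝ) / (Λ + 1) ^ 2 = 1 / (Λ + 1) / (Λ + 1) := by rw [div_div, sq]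
  rw [hsq, add_assoc, ← add_div, add_le_add_iff_left]
  gcongr
  rw [add_div, mul_div_assoc] at htotal
  linarith

theorem stmt_19_general (Λ : ℕ) (k : ℝ)
    (hk : (Λ : ℝ) ^ 2 * ((Λ : ℝ) + 1) ^ 2 ≤ k) :
    (1 + (2 * ∑ m ∈ Finset.Icc 1 (Λ - 1),
          ((m : ℝ) ^ 2 / k) * Real.cos (π * (m : ℝ) / (2 * (Λ : ℝ) + 2)) ^ 2)
            / ((Λ : ℝ) + 1)
      + ((Λ : ℝ) * ((Λ : ℝ) - 1) / k - 1)
          * Real.cos (π * (Λ : ℝ) / (2 * (Λ : ℝ) + 2)) ^ 2 / ((Λ : ℝ) + 1))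
      - ((∑ m ∈ Finset.Icc (1 - (Λ : ℤ)) (Λ : ℤ),
          Real.sqrt (1 + (m : ℝ) * ((m : ℝ) - 1) / k)
            * Real.cos (π * (m : ℝ) / (2 * (Λ : ℝ) + 2))
            * Real.cos (π * ((m : ℝ) - 1) / (2 * (Λ : ℝ) + 2))) / ((Λ : ℝ) + 1)) ^ 2
      ≤ (1 + π ^ 2 / 4) / ((Λ : ℝ) + 1) ^ 2 ∧
    (1 + π ^ 2 / 4) / ((Λ : ℝ) + 1) ^ 2 < 3.5 / ((Λ : ℝ) + 1) ^ 2 := by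
  set θ := π / (2 * Λ + 2) with hθ
  have hsecond := second_moment_le Λ hk (fun m ↦ cos (π * m / (2 * Λ + 2))) fun _ ↦ cos_sq_le_one _
  have hfirst := cos_le_first_moment Λ (le_trans (by positivity) hk)
  have hcos_nonneg : 0 ≤ cos θ := by
    simpa [hθ] using cos_pi_mul_div_nonneg (n := Λ) (x := 1) (by linarith) (by linarith)
  have hcos_sq : 1 - θ ^ 2 ≤ cos θ ^ 2 := by rw [cos_sq']; linarith [sin_sq_le_sq (x := θ)]
  have hθ_sq : θ ^ 2 = π ^ 2 / 4 / (Λ + 1) ^ 2 := by rw [hθ]; field_simp; ring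
  constructor
  · nlinarith [pow_le_pow_left₀ hcos_nonneg hfirst 2, add_div 1 (π ^ 2 / 4) ((Λ + 1 : ℝ) ^ 2)]
  · gcongr
    nlinarith [pi_lt_d2, pi_pos]

/-- On the fuzzy circle `S¹_Λ` with `Λ ≥ 1` and `k = k(Λ) ≥ Λ²(Λ+1)²`, the state `χ`
with components `χ_m = cos(πm/(2Λ+2))`, `m = −Λ,…,Λ`, satisfies
`(Δx)²_χ = ⟨x²⟩_χ − ⟨x₁⟩_χ² ≤ (1+π²/4)/(Λ+1)² < 3.5/(Λ+1)²`, where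
`⟨x²⟩_χ = 1 + [2∑_{m=1}^{Λ−1}(m²/k)χ_m²]/(Λ+1) + [Λ(Λ−1)/k − 1]χ_Λ²/(Λ+1)` and
`⟨x₁⟩_χ = [∑_{m=1−Λ}^{Λ} b_m χ_m χ_{m−1}]/(Λ+1)` with `b_m = √(1+m(m−1)/k)`. -/
theorem stmt_19 (Λ : ℕ) (hΛ : 1 ≤ Λ) (k : ℝ)
    (hk : (Λ : ℝ) ^ 2 * ((Λ : ℝ) + 1) ^ 2 ≤ k) :
    (1 + (2 * ∑ m ∈ Finset.Icc 1 (Λ - 1),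
          ((m : ℝ) ^ 2 / k) * Real.cos (π * (m : ℝ) / (2 * (Λ : ℝ) + 2)) ^ 2)
            / ((Λ : ℝ) + 1)
      + ((Λ : ℝ) * ((Λ : ℝ) - 1) / k - 1)
          * Real.cos (π * (Λ : ℝ) / (2 * (Λ : ℝ) + 2)) ^ 2 / ((Λ : ℝ) + 1))
      - ((∑ m ∈ Finset.Icc (1 - (Λ : ℤ)) (Λ : ℤ),
          Real.sqrt (1 + (m : ℝ) * ((m : ℝ) - 1) / k)
            * Real.cos (π * (m : ℝ) / (2 * (Λ : ℝ) + 2))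
            * Real.cos (π * ((m : ℝ) - 1) / (2 * (Λ : ℝ) + 2))) / ((Λ : ℝ) + 1)) ^ 2
      ≤ (1 + π ^ 2 / 4) / ((Λ : ℝ) + 1) ^ 2 ∧
    (1 + π ^ 2 / 4) / ((Λ : ℝ) + 1) ^ 2 < 3.5 / ((Λ : ℝ) + 1) ^ 2 :=
  stmt_19_general Λ k hk
end
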